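/- Let $F, G$ be smooth real functions of $x = |z_0|^2$ with $F > 0$, and define $\mathrm{scal}(z) = -n(n+1) + G(|z_0|^2)(F(|z_0|^2) - |z_1|^2 - \cdots - |z_{n-1}|^2)$ on the Hartogs domain. Suppose that for some fixed $i \ge 1$ the extremal equation $\frac{\partial}{\partial\bar z_i}\left(\sum_{\beta} g^{\beta\bar 0}\frac{\partial\,\mathrm{scal}}{\partial\bar z_\beta}\right) = 0$ holds on $D_F$ (with $g^{\beta\bar\alpha}$ the inverse Hartogs metric entries). Then $G(x)F'(x) + F(x)G'(x) = 0$ on $(0, x_0)$, i.e., $G = c/F$ for a constant $c$. -/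

import Mathlib

/-- Wirtinger derivative `∂/∂z_i` of `f : ℂⁿ → ℂ`, via the real Fréchet derivative. -/
noncomputable def wdz {n : ℕ} (i : Fin n) (f : (Fin n → ℂ) → ℂ) (z : Fin n → ℂ) : ℂ :=
  (1 / 2 : ℂ) * (fderiv ℝ f z (Pi.single i 1) - Complex.I * fderiv ℝ f z (Pi.single i Complex.I))

/-- Conjugate Wirtinger derivative `∂/∂z̄_i` of `f : ℂⁿ → ℂ`. -/
noncomputable def wdzbar {n : ℕ} (i : Fin n) (f : (Fin n → ℂ) → ℂ) (z : Fin n → ℂ) : ℂ :=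
  (1 / 2 : ℂ) * (fderiv ℝ f z (Pi.single i 1) + Complex.I * fderiv ℝ f z (Pi.single i Complex.I))

/-- Complex Hessian `(∂²f/∂z_α ∂z̄_β)_{α,β}` of a real-valued function on `ℂⁿ`. -/
noncomputable def cHessian {n : ℕ} (f : (Fin n → ℂ) → ℝ) (z : Fin n → ℂ) :
    Matrix (Fin n) (Fin n) ℂ :=
  Matrix.of fun α β => wdz α (fun w => wdzbar β (fun u => ((f u : ℝ) : ℂ)) w) z

/-- `A = F(|z₀|²) - |z₁|² - ⋯ - |z_{n-1}|²`. -/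
noncomputable def hartogsA {n : ℕ} [NeZero n] (F : ℝ → ℝ) (w : Fin n → ℂ) : ℝ :=
  F (Complex.normSq (w 0)) - ∑ k ∈ Finset.univ.erase 0, Complex.normSq (w k)

/-- The Kähler potential `Φ = -log A` of the Hartogs metric `g_F`. -/
noncomputable def hartogsPotential {n : ℕ} [NeZero n] (F : ℝ → ℝ) (w : Fin n → ℂ) : ℝ :=
  -Real.log (hartogsA F w)

/-- The Hartogs domain `D_F = {|z₀|² < x₀, |z₁|² + ⋯ + |z_{n-1}|² < F(|z₀|²)}`. -/
def hartogsDomain {n : ℕ} [NeZero n] (F : ℝ → ℝ) (x₀ : ℝ) : Set (Fin n → ℂ) :=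
  {w | Complex.normSq (w 0) < x₀ ∧
    ∑ k ∈ Finset.univ.erase 0, Complex.normSq (w k) < F (Complex.normSq (w 0))}

/-- `B = F'(x)²x - F(x)(F'(x) + F''(x)x)`. -/
noncomputable def hartogsB (F : ℝ → ℝ) (x : ℝ) : ℝ :=
  (deriv F x) ^ 2 * x - F x * (deriv F x + deriv (deriv F) x * x)


open Complex

noncomputable def nsqD (z : ℂ) : ℂ →L[ℝ] ℝ :=
  (2 * z.re) • Complex.reCLM + (2 * z.im) • Complex.imCLM

lemma hasFDerivAt_normSq (z : ℂ) : HasFDerivAt Complex.normSq (nsqD z) z := by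
  have h : (Complex.normSq : ℂ → ℝ) = fun w => w.re * w.re + w.im * w.im := by
    funext w; exact Complex.normSq_apply w
  rw [h]
  have hre : HasFDerivAt (fun w : ℂ => w.re) Complex.reCLM z := Complex.reCLM.hasFDerivAt
  have him : HasFDerivAt (fun w : ℂ => w.im) Complex.imCLM z := Complex.imCLM.hasFDerivAt
  have := (hre.fun_mul hre).fun_add (him.fun_mul him)
  refine this.congr_fderiv ?_
  ext v <;> simp [nsqD] <;> ring

variable {n : ℕ} [NeZero n]

noncomputable def qD (k : Fin n) (w : Fin n → ℂ) : (Fin n → ℂ) →L[ℝ] ℝ :=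
  (nsqD (w k)).comp (ContinuousLinearMap.proj k)

lemma hasFDerivAt_q (k : Fin n) (w : Fin n → ℂ) :
    HasFDerivAt (fun u : Fin n → ℂ => Complex.normSq (u k)) (qD k w) w :=
  (hasFDerivAt_normSq (w k)).comp w (hasFDerivAt_apply k w)

lemma qD_single (k j : Fin n) (w : Fin n → ℂ) (v : ℂ) :
    qD k w (Pi.single j v) =
      if k = j then 2 * (w k).re * v.re + 2 * (w k).im * v.im else 0 := by
  simp [qD, nsqD, Pi.single_apply]
  split <;> simp

noncomputable def SS (w : Fin n → ℂ) : ℝ := ∑ k ∈ Finset.univ.erase 0, Complex.normSq (w k)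

noncomputable def SD (w : Fin n → ℂ) : (Fin n → ℂ) →L[ℝ] ℝ :=
  ∑ k ∈ Finset.univ.erase 0, qD k w

lemma hasFDerivAt_SS (w : Fin n → ℂ) : HasFDerivAt SS (SD w) w := by
  exact HasFDerivAt.fun_sum fun k _ => hasFDerivAt_q k w

lemma SD_single (j : Fin n) (hj : j ≠ 0) (w : Fin n → ℂ) (v : ℂ) :
    SD w (Pi.single j v) = 2 * (w j).re * v.re + 2 * (w j).im * v.im := by
  simp only [SD, ContinuousLinearMap.coe_sum', Finset.sum_apply, qD_single]
  rw [Finset.sum_ite_eq' (Finset.univ.erase 0) j]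
  simp [hj]

noncomputable def scalC (F G : ℝ → ℝ) (c : ℝ) (u : Fin n → ℂ) : ℂ :=
  ((c + G (Complex.normSq (u 0)) * (F (Complex.normSq (u 0)) - SS u) : ℝ) : ℂ)

lemma hasFDerivAt_scalC (F G : ℝ → ℝ) (c : ℝ) (w : Fin n → ℂ)
    (hF : DifferentiableAt ℝ F (Complex.normSq (w 0)))
    (hG : DifferentiableAt ℝ G (Complex.normSq (w 0))) :
    HasFDerivAt (scalC F G c)
      (Complex.ofRealCLM.comp
        (G (Complex.normSq (w 0)) • (deriv F (Complex.normSq (w 0)) • qD 0 w - SD w) +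
          (F (Complex.normSq (w 0)) - SS w) • (deriv G (Complex.normSq (w 0)) • qD 0 w))) w := by
  have hq0 := hasFDerivAt_q 0 w
  have hGq : HasFDerivAt (fun u : Fin n → ℂ => G (Complex.normSq (u 0)))
      (deriv G (Complex.normSq (w 0)) • qD 0 w) w :=
    (hG.hasDerivAt.comp_hasFDerivAt w hq0)
  have hFq : HasFDerivAt (fun u : Fin n → ℂ => F (Complex.normSq (u 0)))
      (deriv F (Complex.normSq (w 0)) • qD 0 w) w :=
    (hF.hasDerivAt.comp_hasFDerivAt w hq0)
  have hin : HasFDerivAt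
      (fun u : Fin n → ℂ => c + G (Complex.normSq (u 0)) * (F (Complex.normSq (u 0)) - SS u))
      (G (Complex.normSq (w 0)) • (deriv F (Complex.normSq (w 0)) • qD 0 w - SD w) +
        (F (Complex.normSq (w 0)) - SS w) • (deriv G (Complex.normSq (w 0)) • qD 0 w)) w :=
    ((hGq.mul (hFq.sub (hasFDerivAt_SS w))).const_add c)
  exact Complex.ofRealCLM.hasFDerivAt.comp w hin

lemma wdzbar_of_hasFDerivAt {f : (Fin n → ℂ) → ℂ} {L : (Fin n → ℂ) →L[ℝ] ℂ} {w : Fin n → ℂ}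
    (h : HasFDerivAt f L w) (β : Fin n) :
    wdzbar β f w = (1 / 2 : ℂ) * (L (Pi.single β 1) + Complex.I * L (Pi.single β Complex.I)) := by
  rw [wdzbar, h.fderiv]

lemma wdzbar_scalC_ne (F G : ℝ → ℝ) (c : ℝ) (w : Fin n → ℂ) (β : Fin n) (hβ : β ≠ 0)
    (hF : DifferentiableAt ℝ F (Complex.normSq (w 0)))
    (hG : DifferentiableAt ℝ G (Complex.normSq (w 0))) :
    wdzbar β (scalC F G c) w = ((-G (Complex.normSq (w 0)) : ℝ) : ℂ) * w β := by
  rw [wdzbar_of_hasFDerivAt (hasFDerivAt_scalC F G c w hF hG) β]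
  simp only [ContinuousLinearMap.comp_apply, ContinuousLinearMap.add_apply,
    ContinuousLinearMap.smul_apply, ContinuousLinearMap.sub_apply,
    qD_single, SD_single β hβ, Complex.ofRealCLM_apply]
  rw [if_neg (by exact fun h => hβ h.symm), if_neg (by exact fun h => hβ h.symm)]
  have h1 : (1 : ℂ).re = 1 := rfl
  apply Complex.ext <;> simp <;> ring

lemma SD_single_zero (w : Fin n → ℂ) (v : ℂ) : SD w (Pi.single 0 v) = 0 := by
  simp only [SD, ContinuousLinearMap.coe_sum', Finset.sum_apply, qD_single]
  apply Finset.sum_eq_zero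
  intro k hk
  rw [if_neg (Finset.ne_of_mem_erase hk)]

lemma wdzbar_scalC_zero (F G : ℝ → ℝ) (c : ℝ) (w : Fin n → ℂ)
    (hF : DifferentiableAt ℝ F (Complex.normSq (w 0)))
    (hG : DifferentiableAt ℝ G (Complex.normSq (w 0))) :
    wdzbar 0 (scalC F G c) w =
      ((G (Complex.normSq (w 0)) * deriv F (Complex.normSq (w 0)) +
        (F (Complex.normSq (w 0)) - SS w) * deriv G (Complex.normSq (w 0)) : ℝ) : ℂ) * w 0 := by
  rw [wdzbar_of_hasFDerivAt (hasFDerivAt_scalC F G c w hF hG) 0]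
  simp only [ContinuousLinearMap.comp_apply, ContinuousLinearMap.add_apply,
    ContinuousLinearMap.smul_apply, ContinuousLinearMap.sub_apply,
    qD_single, SD_single, Complex.ofRealCLM_apply]
  simp only [if_pos trivial, if_pos rfl, SD_single_zero, Complex.one_re, Complex.one_im,
    Complex.I_re, Complex.I_im, smul_eq_mul]
  apply Complex.ext <;> simp <;> ring

noncomputable def EE (F K : ℝ → ℝ) (w : Fin n → ℂ) : ℂ :=
  w 0 * ((K (Complex.normSq (w 0)) * (F (Complex.normSq (w 0)) - SS w) ^ 2 : ℝ) : ℂ)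

lemma wdzbar_EE (F K : ℝ → ℝ) (z : Fin n → ℂ) (i : Fin n) (hi : i ≠ 0)
    (hF : DifferentiableAt ℝ F (Complex.normSq (z 0)))
    (hK : DifferentiableAt ℝ K (Complex.normSq (z 0))) :
    wdzbar i (EE F K) z =
      ((-2 * K (Complex.normSq (z 0)) * (F (Complex.normSq (z 0)) - SS z) : ℝ) : ℂ) *
        z 0 * z i := by
  have hq0 := hasFDerivAt_q 0 z
  have hKq : HasFDerivAt (fun u : Fin n → ℂ => K (Complex.normSq (u 0)))
      (deriv K (Complex.normSq (z 0)) • qD 0 z) z :=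
    (hK.hasDerivAt.comp_hasFDerivAt z hq0)
  have hFq : HasFDerivAt (fun u : Fin n → ℂ => F (Complex.normSq (u 0)))
      (deriv F (Complex.normSq (z 0)) • qD 0 z) z :=
    (hF.hasDerivAt.comp_hasFDerivAt z hq0)
  have hA : HasFDerivAt (fun u : Fin n → ℂ => F (Complex.normSq (u 0)) - SS u)
      (deriv F (Complex.normSq (z 0)) • qD 0 z - SD z) z := hFq.sub (hasFDerivAt_SS z)
  have hA2 : HasFDerivAt (fun u : Fin n → ℂ => (F (Complex.normSq (u 0)) - SS u) ^ 2)
      ((F (Complex.normSq (z 0)) - SS z) • (deriv F (Complex.normSq (z 0)) • qD 0 z - SD z) +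
        (F (Complex.normSq (z 0)) - SS z) • (deriv F (Complex.normSq (z 0)) • qD 0 z - SD z)) z := by
    simpa [pow_two] using hA.fun_mul hA
  have hreal := hKq.fun_mul hA2
  have hcx : HasFDerivAt (fun u : Fin n → ℂ =>
      ((K (Complex.normSq (u 0)) * (F (Complex.normSq (u 0)) - SS u) ^ 2 : ℝ) : ℂ))
      (Complex.ofRealCLM.comp
        (K (Complex.normSq (z 0)) •
            ((F (Complex.normSq (z 0)) - SS z) • (deriv F (Complex.normSq (z 0)) • qD 0 z - SD z) +
              (F (Complex.normSq (z 0)) - SS z) • (deriv F (Complex.normSq (z 0)) • qD 0 z - SD z)) +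
          (F (Complex.normSq (z 0)) - SS z) ^ 2 • (deriv K (Complex.normSq (z 0)) • qD 0 z))) z :=
    Complex.ofRealCLM.hasFDerivAt.comp z hreal
  have hw0 : HasFDerivAt (fun u : Fin n → ℂ => u 0)
      (ContinuousLinearMap.proj (R := ℝ) (φ := fun _ : Fin n => ℂ) 0) z := hasFDerivAt_apply 0 z
  have hE := hw0.fun_mul' hcx
  unfold EE
  rw [wdzbar_of_hasFDerivAt hE i]
  simp only [ContinuousLinearMap.add_apply, ContinuousLinearMap.smul_apply,
    ContinuousLinearMap.comp_apply, ContinuousLinearMap.sub_apply, ContinuousLinearMap.proj_apply,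
    qD_single, SD_single i hi, Complex.ofRealCLM_apply, Pi.single_apply]
  simp only [if_neg (show ¬(0:Fin n) = i from fun h => hi h.symm)]
  apply Complex.ext <;>
    simp [Pi.single_eq_of_ne (show (0:Fin n) ≠ i from fun h => hi h.symm)] <;> ring

/-- if `scal = -n(n+1) + G·(F - Σ|z_k|²)` satisfies the component
`α = 0, γ = i` (`i ≥ 1`) of the extremal equation
`∂_{z̄_i}(Σ_β g^{β0̄} ∂_{z̄_β} scal) = 0` on `D_F`, where
`g^{00̄} = AF/B` and `g^{β0̄} = (A/B)F'z₀z̄_β`, then `GF' + FG' = 0` on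
`(0,x₀)`, i.e. `G = c/F` for a constant `c`. -/
theorem stmt_15 (n : ℕ) [NeZero n] (hn : 2 ≤ n) (x₀ : ℝ) (hx₀ : 0 < x₀)
    (F G : ℝ → ℝ)
    (hFs : ContDiffOn ℝ (⊤ : ℕ∞) F (Set.Ioo 0 x₀)) (hGs : ContDiffOn ℝ (⊤ : ℕ∞) G (Set.Ioo 0 x₀))
    (hFpos : ∀ x ∈ Set.Ico 0 x₀, 0 < F x)
    (hB : ∀ x ∈ Set.Ioo 0 x₀, hartogsB F x ≠ 0)
    (i : Fin n) (hi : i ≠ 0)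
    (hext : ∀ z ∈ hartogsDomain (n := n) F x₀,
      wdzbar i (fun w =>
        ((hartogsA F w * F (Complex.normSq (w 0)) / hartogsB F (Complex.normSq (w 0)) : ℝ) : ℂ) *
            wdzbar 0 (fun u => ((-(n : ℝ) * ((n : ℝ) + 1) +
              G (Complex.normSq (u 0)) * hartogsA F u : ℝ) : ℂ)) w +
          ∑ β ∈ Finset.univ.erase 0,
            ((hartogsA F w / hartogsB F (Complex.normSq (w 0)) *
                deriv F (Complex.normSq (w 0)) : ℝ) : ℂ) * w 0 * (starRingEnd ℂ) (w β) *
              wdzbar β (fun u => ((-(n : ℝ) * ((n : ℝ) + 1) +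
                G (Complex.normSq (u 0)) * hartogsA F u : ℝ) : ℂ)) w) z = 0) :
    (∀ x ∈ Set.Ioo 0 x₀, G x * deriv F x + F x * deriv G x = 0) ∧
      ∃ c : ℝ, ∀ x ∈ Set.Ioo 0 x₀, G x = c / F x := by
  set c : ℝ := -(n : ℝ) * ((n : ℝ) + 1) with hc
  set Kf : ℝ → ℝ := fun t => (F t * deriv G t + G t * deriv F t) / hartogsB F t with hKf
  -- differentiability of the ingredients on the open interval
  have hFs' : ContDiffOn ℝ (⊤ : ℕ∞) (deriv F) (Set.Ioo 0 x₀) :=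
    hFs.deriv_of_isOpen isOpen_Ioo (by simp)
  have hFs'' : ContDiffOn ℝ (⊤ : ℕ∞) (deriv (deriv F)) (Set.Ioo 0 x₀) :=
    hFs'.deriv_of_isOpen isOpen_Ioo (by simp)
  have hGs' : ContDiffOn ℝ (⊤ : ℕ∞) (deriv G) (Set.Ioo 0 x₀) :=
    hGs.deriv_of_isOpen isOpen_Ioo (by simp)
  have hdiff : ∀ (H : ℝ → ℝ), ContDiffOn ℝ (⊤ : ℕ∞) H (Set.Ioo 0 x₀) →
      ∀ y ∈ Set.Ioo 0 x₀, DifferentiableAt ℝ H y := fun H hH y hy =>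
    (hH.contDiffAt (isOpen_Ioo.mem_nhds hy)).differentiableAt (by simp)
  have hdF := hdiff F hFs
  have hdG := hdiff G hGs
  have hdF' := hdiff _ hFs'
  have hdF'' := hdiff _ hFs''
  have hdG' := hdiff _ hGs'
  have hdB : ∀ y ∈ Set.Ioo 0 x₀, DifferentiableAt ℝ (hartogsB F) y := by
    intro y hy
    have : DifferentiableAt ℝ (fun t => (deriv F t) ^ 2 * t -
        F t * (deriv F t + deriv (deriv F) t * t)) y := by
      exact (((hdF' y hy).pow 2).mul differentiableAt_fun_id).sub
        ((hdF y hy).mul ((hdF' y hy).add ((hdF'' y hy).mul differentiableAt_fun_id)))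
    exact this
  have hdK : ∀ y ∈ Set.Ioo 0 x₀, DifferentiableAt ℝ Kf y := by
    intro y hy
    exact (((hdF y hy).mul (hdG' y hy)).add ((hdG y hy).mul (hdF' y hy))).div
      (hdB y hy) (hB y hy)
  -- the function inside hext agrees with `EE F Kf` on the open set U
  set U : Set (Fin n → ℂ) := (fun w : Fin n → ℂ => Complex.normSq (w 0)) ⁻¹' (Set.Ioo 0 x₀)
    with hU
  have hUopen : IsOpen U :=
    isOpen_Ioo.preimage (Complex.continuous_normSq.comp (continuous_apply 0))
  have hscal : (fun u : Fin n → ℂ => ((-(n : ℝ) * ((n : ℝ) + 1) +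
      G (Complex.normSq (u 0)) * hartogsA F u : ℝ) : ℂ)) = scalC F G c := rfl
  have h_eq : ∀ w ∈ U,
      (((hartogsA F w * F (Complex.normSq (w 0)) / hartogsB F (Complex.normSq (w 0)) : ℝ) : ℂ) *
            wdzbar 0 (fun u => ((-(n : ℝ) * ((n : ℝ) + 1) +
              G (Complex.normSq (u 0)) * hartogsA F u : ℝ) : ℂ)) w +
          ∑ β ∈ Finset.univ.erase 0,
            ((hartogsA F w / hartogsB F (Complex.normSq (w 0)) *
                deriv F (Complex.normSq (w 0)) : ℝ) : ℂ) * w 0 * (starRingEnd ℂ) (w β) *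
              wdzbar β (fun u => ((-(n : ℝ) * ((n : ℝ) + 1) +
                G (Complex.normSq (u 0)) * hartogsA F u : ℝ) : ℂ)) w)
        = EE F Kf w := by
    intro w hw
    have hxw : Complex.normSq (w 0) ∈ Set.Ioo 0 x₀ := hw
    set xw : ℝ := Complex.normSq (w 0) with hxwdef
    have hAeq : hartogsA F w = F xw - SS w := rfl
    rw [hscal, wdzbar_scalC_zero F G c w (hdF xw hxw) (hdG xw hxw)]
    have hsum : ∀ β ∈ Finset.univ.erase (0 : Fin n),
        ((hartogsA F w / hartogsB F xw * deriv F xw : ℝ) : ℂ) * w 0 * (starRingEnd ℂ) (w β) *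
          wdzbar β (scalC F G c) w
        = ((hartogsA F w / hartogsB F xw * deriv F xw : ℝ) : ℂ) * w 0 *
            ((-G xw : ℝ) : ℂ) * ((Complex.normSq (w β) : ℝ) : ℂ) := by
      intro β hβ
      rw [wdzbar_scalC_ne F G c w β (Finset.ne_of_mem_erase hβ) (hdF xw hxw) (hdG xw hxw)]
      have hcj : (starRingEnd ℂ) (w β) * w β = ((Complex.normSq (w β) : ℝ) : ℂ) := by
        rw [mul_comm, Complex.mul_conj]
      linear_combination (((hartogsA F w / hartogsB F xw * deriv F xw : ℝ) : ℂ) * w 0 *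
        ((-G xw : ℝ) : ℂ)) * hcj
    rw [Finset.sum_congr rfl hsum, ← Finset.mul_sum]
    have hSS : ∑ β ∈ Finset.univ.erase (0 : Fin n), ((Complex.normSq (w β) : ℝ) : ℂ)
        = ((SS w : ℝ) : ℂ) := by rw [SS]; push_cast; ring
    rw [hSS]
    have hBne := hB xw hxw
    have hre : hartogsA F w * F xw / hartogsB F xw *
          (G xw * deriv F xw + (F xw - SS w) * deriv G xw) +
        hartogsA F w / hartogsB F xw * deriv F xw * (-G xw) * SS w
        = Kf xw * (F xw - SS w) ^ 2 := by
      rw [hAeq, hKf]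
      field_simp
      ring
    have : EE F Kf w = w 0 * ((Kf xw * (F xw - SS w) ^ 2 : ℝ) : ℂ) := rfl
    rw [this, ← hre]
    push_cast
    ring
  -- Part 1
  have part1 : ∀ x ∈ Set.Ioo 0 x₀, G x * deriv F x + F x * deriv G x = 0 := by
    intro x hx
    have hxpos : 0 < x := hx.1
    have hFx : 0 < F x := hFpos x ⟨le_of_lt hxpos, hx.2⟩
    set s : ℝ := F x / 2 with hs
    have hspos : 0 < s := by positivity
    set z : Fin n → ℂ := fun k => if k = 0 then ((Real.sqrt x : ℝ) : ℂ)
      else if k = i then ((Real.sqrt s : ℝ) : ℂ) else 0 with hz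
    have hz0 : z 0 = ((Real.sqrt x : ℝ) : ℂ) := by simp [hz]
    have hzi : z i = ((Real.sqrt s : ℝ) : ℂ) := by simp [hz, hi]
    have hx0n : Complex.normSq (z 0) = x := by
      rw [hz0, Complex.normSq_ofReal, Real.mul_self_sqrt (le_of_lt hxpos)]
    have hSSz : SS z = s := by
      rw [SS]
      rw [Finset.sum_eq_single_of_mem i
        (Finset.mem_erase.mpr ⟨hi, Finset.mem_univ i⟩)]
      · rw [hzi, Complex.normSq_ofReal, Real.mul_self_sqrt (le_of_lt hspos)]
      · intro k hk hki
        have hk0 : k ≠ 0 := Finset.ne_of_mem_erase hk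
        simp [hz, hk0, hki]
    have hzmem : z ∈ hartogsDomain (n := n) F x₀ := by
      constructor
      · rw [hx0n]; exact hx.2
      · show SS z < F (Complex.normSq (z 0))
        rw [hSSz, hx0n]
        linarith
    have hzU : z ∈ U := by
      show Complex.normSq (z 0) ∈ Set.Ioo 0 x₀
      rw [hx0n]; exact hx
    have hev : (fun w =>
        ((hartogsA F w * F (Complex.normSq (w 0)) / hartogsB F (Complex.normSq (w 0)) : ℝ) : ℂ) *
            wdzbar 0 (fun u => ((-(n : ℝ) * ((n : ℝ) + 1) +
              G (Complex.normSq (u 0)) * hartogsA F u : ℝ) : ℂ)) w +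
          ∑ β ∈ Finset.univ.erase 0,
            ((hartogsA F w / hartogsB F (Complex.normSq (w 0)) *
                deriv F (Complex.normSq (w 0)) : ℝ) : ℂ) * w 0 * (starRingEnd ℂ) (w β) *
              wdzbar β (fun u => ((-(n : ℝ) * ((n : ℝ) + 1) +
                G (Complex.normSq (u 0)) * hartogsA F u : ℝ) : ℂ)) w)
        =ᶠ[nhds z] EE F Kf :=
      Filter.eventuallyEq_of_mem (hUopen.mem_nhds hzU) h_eq
    have hzero : wdzbar i (EE F Kf) z = 0 := by
      have h1 := hext z hzmem
      unfold wdzbar at h1 ⊢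
      rw [← hev.fderiv_eq]
      exact h1
    rw [wdzbar_EE F Kf z i hi (by rw [hx0n]; exact hdF x hx) (by rw [hx0n]; exact hdK x hx),
      hx0n, hSSz, hz0, hzi] at hzero
    have hne1 : ((Real.sqrt x : ℝ) : ℂ) ≠ 0 := by
      simp only [ne_eq, Complex.ofReal_eq_zero]
      positivity
    have hne2 : ((Real.sqrt s : ℝ) : ℂ) ≠ 0 := by
      simp only [ne_eq, Complex.ofReal_eq_zero]
      positivity
    have hmain : ((-2 * Kf x * (F x - s) : ℝ) : ℂ) = 0 := by
      rcases mul_eq_zero.mp hzero with h | h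
      · rcases mul_eq_zero.mp h with h' | h'
        · exact h'
        · exact absurd h' hne1
      · exact absurd h hne2
    have hmainR : -2 * Kf x * (F x - s) = 0 := by exact_mod_cast hmain
    have hFs2 : F x - s = F x / 2 := by rw [hs]; ring
    have hK0 : Kf x = 0 := by
      rcases mul_eq_zero.mp hmainR with h | h
      · rcases mul_eq_zero.mp h with h' | h'
        · norm_num at h'
        · exact h'
      · rw [hFs2] at h; linarith
    have := (div_eq_zero_iff.mp hK0).resolve_right (hB x hx)
    linarith
  refine ⟨part1, ?_⟩
  -- Part 2: constancy of F*G
  set H : ℝ → ℝ := fun t => F t * G t with hH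
  have hHdiff : DifferentiableOn ℝ H (Set.Ioo 0 x₀) := fun y hy =>
    ((hdF y hy).mul (hdG y hy)).differentiableWithinAt
  have hHzero : ∀ y ∈ Set.Ioo 0 x₀, fderivWithin ℝ H (Set.Ioo 0 x₀) y = 0 := by
    intro y hy
    have hder : HasDerivAt H 0 y := by
      have := ((hdF y hy).hasDerivAt.mul (hdG y hy).hasDerivAt)
      have h0 : deriv F y * G y + F y * deriv G y = 0 := by
        have := part1 y hy; linarith
      rwa [h0] at this
    rw [fderivWithin_of_isOpen isOpen_Ioo hy, hder.hasFDerivAt.fderiv]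
    ext v
    simp
  have hmid : x₀ / 2 ∈ Set.Ioo 0 x₀ := by constructor <;> linarith
  refine ⟨H (x₀ / 2), fun x hx => ?_⟩
  have hconst : H x = H (x₀ / 2) :=
    (convex_Ioo 0 x₀).is_const_of_fderivWithin_eq_zero hHdiff hHzero hx hmid
  have hFx : 0 < F x := hFpos x ⟨le_of_lt hx.1, hx.2⟩
  rw [eq_div_iff (ne_of_gt hFx)]
  have h2 : F x * G x = F (x₀ / 2) * G (x₀ / 2) := hconst
  show G x * F x = F (x₀ / 2) * G (x₀ / 2)
  linarith
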